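/- arXiv:1709.07910 — 8 statements merged into one kernel-verified Lean document; each statement's English description precedes it below -/
import Mathlib

section
/- For every natural number n and real x > 0, the n-th Bell polynomial satisfies Dobinski's formula: B_n(x) = e^{-x} · Σ_{j≥0} j^n x^j / j!. -/
/-!
Peeling off the vanishing `j = 0` term and shifting the index turns `∑ j^(n+1) x^j / j!` into
`x ∑ (j+1)^n x^j / j!`, and expanding `(j+1)^n` binomially shows that the Dobinski sums
`S_n(x) = ∑ j^n x^j / j!` obey the Bell recurrence `S_{n+1} = x ∑_k C(n,k) S_k`, with
`S_0 = e^x`. Hence `e^{-x} S_n(x)` and `B_n(x)` agree by strong induction on `n`.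
-/

open Finset Nat

noncomputable def dobinskiSum (n : ℕ) (x : ℝ) : ℝ :=
  ∑' j : ℕ, (j : ℝ) ^ n * x ^ j / (j ! : ℝ)

theorem summable_pow_mul_pow_div_factorial (n : ℕ) (x : ℝ) :
    Summable fun j : ℕ => (j : ℝ) ^ n * x ^ j / (j ! : ℝ) := by
  set M := ∑' j : ℕ, (2 * |x|) ^ j / (j ! : ℝ)
  have h_le_M (j : ℕ) : (2 * |x|) ^ j / (j ! : ℝ) ≤ M :=
    (Real.summable_pow_div_factorial _).le_tsum j fun i _ => by positivity
  have h_major : Summable fun j : ℕ => (j : ℝ) ^ n * (1 / 2 : ℝ) ^ j * M :=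
    (summable_pow_mul_geometric_of_norm_lt_one n (by norm_num)).mul_right M
  refine .of_norm_bounded h_major fun j => ?_
  calc ‖(j : ℝ) ^ n * x ^ j / (j ! : ℝ)‖
      = (j : ℝ) ^ n * (1 / 2 : ℝ) ^ j * ((2 * |x|) ^ j / (j ! : ℝ)) := by
        rw [Real.norm_eq_abs, abs_div, abs_mul, abs_pow, abs_pow, Nat.abs_cast, Nat.abs_cast,
          mul_pow]
        field_simp
        rw [mul_assoc _ ((1 / 2 : ℝ) ^ j), ← mul_pow]
        norm_num
    _ ≤ (j : ℝ) ^ n * (1 / 2 : ℝ) ^ j * M := by gcongr; exact h_le_M j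

theorem dobinskiSum_zero (x : ℝ) : dobinskiSum 0 x = Real.exp x := by
  simp [dobinskiSum, Real.exp_eq_exp_ℝ, NormedSpace.exp_eq_tsum_div]

theorem pow_succ_mul_pow_succ_div_factorial_succ (n j : ℕ) (x : ℝ) :
    ((j + 1 : ℕ) : ℝ) ^ (n + 1) * x ^ (j + 1) / ((j + 1) ! : ℝ) =
      x * ∑ k ∈ range (n + 1), (n.choose k : ℝ) * ((j : ℝ) ^ k * x ^ j / (j ! : ℝ)) := by
  have h_binom : ((j : ℝ) + 1) ^ n = ∑ k ∈ range (n + 1), (j : ℝ) ^ k * (n.choose k : ℝ) := by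
    simpa using add_pow (j : ℝ) 1 n
  have h_sum : ∑ k ∈ range (n + 1), (n.choose k : ℝ) * ((j : ℝ) ^ k * x ^ j / (j ! : ℝ)) =
      ((j : ℝ) + 1) ^ n * x ^ j / (j ! : ℝ) := by
    rw [h_binom, sum_mul, sum_div]
    exact sum_congr rfl fun k _ => by ring
  rw [h_sum, Nat.factorial_succ]
  push_cast
  field_simp
  ring

theorem dobinskiSum_succ (n : ℕ) (x : ℝ) :
    dobinskiSum (n + 1) x = x * ∑ k ∈ range (n + 1), (n.choose k : ℝ) * dobinskiSum k x := by
  have h_shift := (summable_pow_mul_pow_div_factorial (n + 1) x).tsum_eq_zero_add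
  rw [Nat.cast_zero, zero_pow n.succ_ne_zero, zero_mul, zero_div, zero_add] at h_shift
  rw [dobinskiSum, h_shift, tsum_congr (pow_succ_mul_pow_succ_div_factorial_succ n · x),
    tsum_mul_left, Summable.tsum_finsetSum fun k _ =>
      (summable_pow_mul_pow_div_factorial k x).mul_left _]
  simp only [tsum_mul_left, dobinskiSum]

/-- **Dobinski's formula.** If `B` is the sequence of Bell polynomials, defined by
`B 0 = 1` and the recurrence `B (n+1) = X * ∑ k ≤ n, (n.choose k) • B k`, then for every
`n` and every real `x > 0` we have `B_n(x) = e^{-x} ∑_{j ≥ 0} j^n x^j / j!`. -/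
theorem bell_dobinski (B : ℕ → Polynomial ℝ)
    (hB0 : B 0 = 1)
    (hBrec : ∀ n : ℕ, B (n + 1) =
      Polynomial.X * ∑ k ∈ Finset.range (n + 1), Polynomial.C ((n.choose k : ℝ)) * B k) :
    ∀ (n : ℕ) (x : ℝ), 0 < x →
      (B n).eval x =
        Real.exp (-x) * ∑' j : ℕ, (j : ℝ) ^ n * x ^ j / (j.factorial : ℝ) := by
  intro n x _
  change (B n).eval x = Real.exp (-x) * dobinskiSum n x
  induction n using Nat.strong_induction_on with
  | _ n ih =>
    cases n with
    | zero => rw [hB0, Polynomial.eval_one, dobinskiSum_zero, ← Real.exp_add, neg_add_cancel,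
        Real.exp_zero]
    | succ n =>
      have h_eval : ∀ k ∈ range (n + 1), (n.choose k : ℝ) * (B k).eval x =
          Real.exp (-x) * ((n.choose k : ℝ) * dobinskiSum k x) := fun k hk => by
        rw [ih k (mem_range.mp hk)]; ring
      simp only [hBrec, Polynomial.eval_mul, Polynomial.eval_X, Polynomial.eval_finsetSum,
        Polynomial.eval_C]
      rw [sum_congr rfl h_eval, ← mul_sum, dobinskiSum_succ]
      ring
end

section
/- For every natural number n, nonnegative integer r, and real x > 0, the r-Bell polynomial satisfies B_{n,r}(x) = e^{-x} · Σ_{j≥0} (j+r)^n x^j / j!. -/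
/-!
Weighting the exponential series of `e^{(j+r)t}` by `x^j / j!` gives an absolutely convergent
double series. Summing it over `n` first yields `e^{rt} exp (x e^t)`; summing over `j` first yields
the exponential generating function of `∑_j (j+r)^n x^j / j!`. After multiplying by `e^{-x}` both
sides are the generating function of `B_{n,r}(x)`, and the coefficients of an everywhere convergent
power series are unique.
-/

open Real Nat

theorem eq_zero_of_hasSum_mul_pow {a : ℕ → ℝ} (h : ∀ t : ℝ, HasSum (fun n ↦ a n * t ^ n) 0) :
    a = 0 := by
  set p := FormalMultilinearSeries.ofScalars ℝ a
  have hp : HasFPowerSeriesOnBall 0 p 0 1 := by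
    refine ⟨?_, one_pos, fun {y} _ ↦ ?_⟩
    · refine FormalMultilinearSeries.le_radius_of_summable (r := 1) p ?_
      simpa [p, FormalMultilinearSeries.ofScalars_norm] using (h 1).summable.abs
    · simpa [p, FormalMultilinearSeries.ofScalars_apply_eq, mul_comm] using h y
  exact (FormalMultilinearSeries.ofScalars_series_eq_zero ℝ).mp hp.hasFPowerSeriesAt.eq_zero

theorem eq_of_hasSum_mul_pow_div_factorial {a b : ℕ → ℝ} {f : ℝ → ℝ}
    (ha : ∀ t, HasSum (fun n ↦ a n * t ^ n / n !) (f t))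
    (hb : ∀ t, HasSum (fun n ↦ b n * t ^ n / n !) (f t)) : a = b := by
  have h := eq_zero_of_hasSum_mul_pow (a := fun n ↦ (a n - b n) / n !) fun t ↦ by
    simpa [sub_div, sub_mul, div_mul_eq_mul_div] using (ha t).sub (hb t)
  funext n
  have := congrFun h n
  simp only [Pi.zero_apply, div_eq_zero_iff, sub_eq_zero, Nat.cast_eq_zero] at this
  exact this.resolve_right n.factorial_ne_zero

theorem hasSum_pow_div_factorial (y : ℝ) : HasSum (fun n ↦ y ^ n / n !) (exp y) := by
  simpa [Real.exp_eq_exp_ℝ] using NormedSpace.expSeries_div_hasSum_exp y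

theorem hasSum_tsum_pow_mul_mul_pow_div_factorial {w μ : ℕ → ℝ} {t : ℝ}
    (hsum : Summable fun j ↦ |w j| * exp (|μ j| * |t|)) :
    HasSum (fun n ↦ (∑' j, μ j ^ n * w j) * t ^ n / n !) (∑' j, w j * exp (μ j * t)) := by
  set F : ℕ → ℕ → ℝ := fun j n ↦ w j * ((μ j * t) ^ n / n !)
  have hrow_abs (j : ℕ) :
      HasSum (fun n ↦ |Function.uncurry F (j, n)|) (|w j| * exp (|μ j| * |t|)) := by
    simpa [F, abs_mul, abs_div] using (hasSum_pow_div_factorial (|μ j| * |t|)).mul_left |w j|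
  have hF : Summable (Function.uncurry F) :=
    .of_abs <| (summable_prod_of_nonneg fun _ ↦ abs_nonneg _).mpr
      ⟨fun j ↦ (hrow_abs j).summable, hsum.congr fun j ↦ (hrow_abs j).tsum_eq.symm⟩
  have hrow (j : ℕ) : ∑' n, F j n = w j * exp (μ j * t) :=
    ((hasSum_pow_div_factorial _).mul_left _).tsum_eq
  have hcol (n : ℕ) : ∑' j, F j n = (∑' j, μ j ^ n * w j) * t ^ n / n ! := by
    rw [mul_div_assoc, ← tsum_mul_right]
    exact tsum_congr fun j ↦ by ring
  rw [← funext hcol, ← tsum_congr hrow, ← hF.tsum_comm]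
  exact hF.prod_symm.prod.hasSum

theorem hasSum_pow_div_factorial_mul_exp (x r t : ℝ) :
    HasSum (fun j : ℕ ↦ x ^ j / j ! * exp ((j + r) * t)) (exp (r * t) * exp (x * exp t)) := by
  refine ((hasSum_pow_div_factorial (x * exp t)).mul_left (exp (r * t))).congr_fun fun j ↦ ?_
  rw [mul_pow, ← exp_nat_mul, add_mul, exp_add]
  ring

/-- **Dobinski's formula for `r`-Bell polynomials.** If `B n` is the `r`-Bell polynomial
`B_{n,r}`, characterized by the exponential generating function
`∑ n, B_{n,r}(x) t^n / n! = e^{r t} · exp (x (e^t − 1))`, then for every `n` and every real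
`x > 0` we have `B_{n,r}(x) = e^{-x} ∑_{j ≥ 0} (j + r)^n x^j / j!`. -/
theorem rBell_dobinski (r : ℕ) (B : ℕ → ℝ → ℝ)
    (hB : ∀ (x t : ℝ), HasSum (fun n : ℕ => B n x * t ^ n / (n.factorial : ℝ))
      (Real.exp ((r : ℝ) * t) * Real.exp (x * (Real.exp t - 1)))) :
    ∀ (n : ℕ) (x : ℝ), 0 < x →
      B n x = Real.exp (-x) * ∑' j : ℕ, ((j : ℝ) + r) ^ n * x ^ j / (j.factorial : ℝ) := by
  intro n x _
  suffices hC : ∀ t : ℝ, HasSum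
      (fun n ↦ (exp (-x) * ∑' j : ℕ, ((j : ℝ) + r) ^ n * x ^ j / j !) * t ^ n / n !)
      (exp (r * t) * exp (x * (exp t - 1))) from
    congrFun (eq_of_hasSum_mul_pow_div_factorial (hB x) hC) n
  intro t
  have hμ (j : ℕ) : |(j : ℝ) + r| = j + r := abs_of_nonneg (by positivity)
  have hsum : Summable fun j : ℕ ↦ |x ^ j / j !| * exp (|(j : ℝ) + r| * |t|) := by
    simpa [abs_div, abs_pow, hμ] using
      (hasSum_pow_div_factorial_mul_exp |x| r |t|).summable
  have hegf := (hasSum_tsum_pow_mul_mul_pow_div_factorial hsum).mul_left (exp (-x))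
  rw [(hasSum_pow_div_factorial_mul_exp x r t).tsum_eq] at hegf
  rw [mul_sub, mul_one, sub_eq_neg_add, exp_add, mul_left_comm]
  refine hegf.congr_fun fun n ↦ ?_
  simp only [mul_div_assoc]
  ring
end

section
/- Let f be a polynomial with real coefficients, and define the umbral evaluation f(B_x) := e^{-x} Σ_{k≥0} f(k) x^k/k! (a polynomial in x). If for every positive real x, every real zero condition holds — namely f(B_x), viewed as a polynomial in x, has only real zeros — then for any nonnegative integer r the polynomial x ↦ e^{-x} Σ_{k≥0} f(k+r) x^k/k! also has only real zeros. -/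
/-!
Write `T g` for the polynomial `e^{-x} ∑ g(k) x^k / k!`, so that `e^{-x} ∑ f(k + r) x^k / k!` is
`T (f(X + r))`. Then `T (g(X + 1)) = T g + (T g)'`, which is `d/dx (e^x T g) = e^x T (g(X + 1))`.
Both sides are linear in `g`, so it suffices to check this on the
falling factorials `(X)_n`, where `T (X)_n = x^n` and `(X + 1)_n = (X)_n + n (X)_{n-1}`; no
termwise differentiation of the series is needed.

Hence `T (f(X + r)) = (1 + d/dx)^r (T f)`, and `1 + d/dx` preserves real-rootedness: if all roots
`w` of `P` are real and `z` is not, `P'(z)/P(z) = ∑ 1/(z - w)` has imaginary part of sign opposite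
to `Im z`, so it is not `-1`.
-/

/-- A real polynomial has only real zeros: every complex root has imaginary part zero. -/
def RZ (p : Polynomial ℝ) : Prop :=
  ∀ z : ℂ, (p.map (algebraMap ℝ ℂ)).IsRoot z → z.im = 0

open Polynomial
open scoped Nat

theorem RZ.add_derivative {p : ℝ[X]} (hp : RZ p) : RZ (p + derivative p) := by
  intro z hz
  by_contra hz_im
  set P := p.map (algebraMap ℝ ℂ)
  have hPz : P.eval z ≠ 0 := fun h => hz_im (hp z h)
  set S := (P.roots.map fun w => 1 / (z - w)).sum
  have hS : 1 + S = 0 := by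
    have hP' := (IsAlgClosed.splits P).eval_derivative_eq_eval_mul_sum hPz
    rw [IsRoot, Polynomial.map_add, ← derivative_map, eval_add, hP', ← mul_one_add] at hz
    exact (mul_eq_zero.mp hz).resolve_left hPz
  have hroots : P.roots ≠ 0 := by
    intro h
    simp [S, h] at hS
  have hterm : ∀ w ∈ P.roots, z.im * (1 / (z - w)).im < 0 := by
    intro w hw
    have hw_im : w.im = 0 := hp w (isRoot_of_mem_roots hw)
    have hzw : 0 < Complex.normSq (z - w) :=
      Complex.normSq_pos.mpr fun h => hz_im (by simpa [sub_eq_zero.mp h] using hw_im)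
    rw [one_div, Complex.inv_im, Complex.sub_im, hw_im, sub_zero, mul_div_assoc', mul_neg]
    exact div_neg_of_neg_of_pos (neg_neg_of_pos (mul_self_pos.mpr hz_im)) hzw
  have hS_im : z.im * S.im < 0 := by
    have hS_im : S.im = (P.roots.map fun w => (1 / (z - w)).im).sum := by
      simpa [S, Multiset.map_map] using
        map_multiset_sum Complex.imAddGroupHom (P.roots.map fun w => 1 / (z - w))
    rw [hS_im, ← Multiset.sum_map_mul_left]
    simpa using Multiset.sum_lt_sum_of_nonempty hroots hterm
  rw [eq_neg_of_add_eq_zero_right hS] at hS_im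
  simp at hS_im

/-- `P(x) = e^{-x} ∑ g(k) x^k / k!`, stated as a `HasSum` so that convergence is part of it. -/
def HasUmbralEval (g P : ℝ[X]) : Prop :=
  ∀ x : ℝ, HasSum (fun k : ℕ => g.eval (k : ℝ) * x ^ k / k !) (Real.exp x * P.eval x)

namespace HasUmbralEval

variable {g h P Q : ℝ[X]}

theorem unique (hP : HasUmbralEval g P) (hQ : HasUmbralEval g Q) : P = Q :=
  Polynomial.funext fun x => mul_left_cancel₀ (Real.exp_ne_zero x) ((hP x).unique (hQ x))

theorem eq_of_forall_eval_eq (hP : HasUmbralEval g P) {q : ℝ[X]}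
    (hq : ∀ x : ℝ, q.eval x = Real.exp (-x) * ∑' k : ℕ, g.eval (k : ℝ) * x ^ k / k !) :
    q = P :=
  Polynomial.funext fun x => by
    rw [hq, (hP x).tsum_eq, Real.exp_neg, inv_mul_cancel_left₀ (Real.exp_ne_zero x)]

theorem zero : HasUmbralEval 0 0 := fun x => by simp [hasSum_zero]

theorem add (hg : HasUmbralEval g P) (hh : HasUmbralEval h Q) : HasUmbralEval (g + h) (P + Q) :=
  fun x => by simpa only [eval_add, add_mul, add_div, mul_add] using (hg x).add (hh x)

theorem smul (c : ℝ) (hg : HasUmbralEval g P) : HasUmbralEval (c • g) (c • P) :=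
  fun x => by
    simpa only [eval_smul, smul_eq_mul, mul_assoc, mul_div_assoc, mul_left_comm (Real.exp x)]
      using (hg x).mul_left c

end HasUmbralEval

theorem hasUmbralEval_descPochhammer (n : ℕ) : HasUmbralEval (descPochhammer ℝ n) (X ^ n) := by
  intro x
  have hlow : ∑ k ∈ Finset.range n, (descPochhammer ℝ n).eval (k : ℝ) * x ^ k / k ! = 0 :=
    Finset.sum_eq_zero fun k hk => by
      rw [descPochhammer_eval_eq_descFactorial,
        Nat.descFactorial_eq_zero_iff_lt.mpr (Finset.mem_range.mp hk)]
      simp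
  have hshift : ∀ m : ℕ, (descPochhammer ℝ n).eval ((m + n : ℕ) : ℝ) * x ^ (m + n) / (m + n)! =
      x ^ n * (x ^ m / m !) := fun m => by
    have hfac : (m ! : ℝ) * (m + n).descFactorial n = (m + n)! := by
      exact_mod_cast Nat.add_sub_cancel_right m n ▸
        Nat.factorial_mul_descFactorial (Nat.le_add_left n m)
    rw [descPochhammer_eval_eq_descFactorial, ← hfac, pow_add]
    field_simp
  rw [← hasSum_nat_add_iff' n, hlow, sub_zero]
  simp only [hshift, eval_pow, eval_X]
  rw [mul_comm, Real.exp_eq_exp_ℝ]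
  exact (NormedSpace.expSeries_div_hasSum_exp x).mul_left (x ^ n)

theorem descPochhammer_succ_comp_X_add_one (R : Type*) [CommRing R] (n : ℕ) :
    (descPochhammer R (n + 1)).comp (X + 1) =
      descPochhammer R (n + 1) + (n + 1 : R[X]) * descPochhammer R n := by
  conv_lhs => rw [descPochhammer_succ_left, mul_comp, X_comp, comp_assoc, sub_comp, X_comp,
    one_comp, add_sub_cancel_right, comp_X]
  rw [descPochhammer_succ_right]
  ring

theorem hasUmbralEval_descPochhammer_comp_X_add_one (n : ℕ) :
    HasUmbralEval ((descPochhammer ℝ n).comp (X + 1)) (X ^ n + derivative (X ^ n)) := by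
  cases n with
  | zero => simpa using hasUmbralEval_descPochhammer 0
  | succ n =>
    rw [descPochhammer_succ_comp_X_add_one, derivative_X_pow]
    simpa [← smul_eq_C_mul, Algebra.smul_def] using
      (hasUmbralEval_descPochhammer (n + 1)).add
        ((hasUmbralEval_descPochhammer n).smul ((n : ℝ) + 1))

theorem span_descPochhammer (R : Type*) [Ring R] [Nontrivial R] [NoZeroDivisors R] :
    Submodule.span R (Set.range (descPochhammer R)) = ⊤ :=
  Polynomial.Sequence.span (S := ⟨descPochhammer R, fun n => by
    rw [degree_eq_natDegree (monic_descPochhammer R n).ne_zero, descPochhammer_natDegree]⟩)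
    fun n => by simp [(monic_descPochhammer R n).leadingCoeff]

theorem exists_hasUmbralEval_and_comp_X_add_one (g : ℝ[X]) :
    ∃ P, HasUmbralEval g P ∧ HasUmbralEval (g.comp (X + 1)) (P + derivative P) := by
  induction (span_descPochhammer ℝ ▸ Submodule.mem_top : g ∈ Submodule.span ℝ _)
    using Submodule.span_induction with
  | mem _ hmem =>
    obtain ⟨n, rfl⟩ := hmem
    exact ⟨X ^ n, hasUmbralEval_descPochhammer n, hasUmbralEval_descPochhammer_comp_X_add_one n⟩
  | zero => exact ⟨0, HasUmbralEval.zero, by simpa using HasUmbralEval.zero⟩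
  | add g h _ _ hg hh =>
    obtain ⟨P, hP, hP'⟩ := hg
    obtain ⟨Q, hQ, hQ'⟩ := hh
    refine ⟨P + Q, hP.add hQ, ?_⟩
    rw [add_comp, derivative_add, add_add_add_comm]
    exact hP'.add hQ'
  | smul c g _ hg =>
    obtain ⟨P, hP, hP'⟩ := hg
    refine ⟨c • P, hP.smul c, ?_⟩
    rw [smul_comp, derivative_smul, ← smul_add]
    exact hP'.smul c

theorem HasUmbralEval.comp_X_add_one {g P : ℝ[X]} (hP : HasUmbralEval g P) :
    HasUmbralEval (g.comp (X + 1)) (P + derivative P) := by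
  obtain ⟨Q, hQ, hQ'⟩ := exists_hasUmbralEval_and_comp_X_add_one g
  rwa [hP.unique hQ]

theorem HasUmbralEval.comp_X_add_natCast {g P : ℝ[X]} (hP : HasUmbralEval g P) (r : ℕ) :
    HasUmbralEval (g.comp (X + (r : ℝ[X]))) ((fun Q => Q + derivative Q)^[r] P) := by
  induction r with
  | zero => simpa using hP
  | succ r ih =>
    have hcomp : g.comp (X + ((r + 1 : ℕ) : ℝ[X])) =
        (g.comp (X + (r : ℝ[X]))).comp (X + 1) := by
      rw [comp_assoc, add_comp, X_comp, natCast_comp, Nat.cast_succ, add_assoc, add_comm 1]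
    rw [Function.iterate_succ_apply', hcomp]
    exact ih.comp_X_add_one

/-- If the umbral evaluation `f(B_x) = e^{-x} ∑_k f(k) x^k / k!` (as a polynomial `p` in `x`)
has only real zeros, then for every nonnegative integer `r` the polynomial
`x ↦ e^{-x} ∑_k f(k + r) x^k / k!` also has only real zeros. -/
theorem umbral_shift_real_rooted (f : Polynomial ℝ) (p : Polynomial ℝ)
    (hp : ∀ x : ℝ, p.eval x =
      Real.exp (-x) * ∑' k : ℕ, f.eval (k : ℝ) * x ^ k / (k.factorial : ℝ))
    (hpRZ : RZ p) (r : ℕ) :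
    ∀ q : Polynomial ℝ, (∀ x : ℝ, q.eval x =
      Real.exp (-x) * ∑' k : ℕ, f.eval ((k : ℝ) + r) * x ^ k / (k.factorial : ℝ)) → RZ q := by
  intro q hq
  obtain ⟨P, hP, -⟩ := exists_hasUmbralEval_and_comp_X_add_one f
  rw [← hP.eq_of_forall_eval_eq hp] at hP
  have hqP := (hP.comp_X_add_natCast r).eq_of_forall_eval_eq (q := q)
    (by simpa [eval_comp] using hq)
  rw [hqP]
  exact Function.Iterate.rec RZ hpRZ (fun _ => RZ.add_derivative) r
end

section
/- For all natural numbers n and r, there holds e^{-x} Σ_{k≥0} (k+r)_n x^k/k! = Σ_{j=0}^{min(n,r)} C(n,j) (r)_j x^{n−j}, where (m)_j denotes the falling factorial. -/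
/-!
Chu–Vandermonde for falling factorials gives `(k + r)_n = ∑ C(n,j) (r)_j (k)_{n-j}`, and
`∑_k (k)_m x^k / k! = x^m e^x` since the terms with `k < m` vanish and the rest is the exponential
series shifted by `m`. Summing termwise, the factor `e^x` cancels, and the terms with `j > r`
vanish because then `(r)_j = 0`.
-/

open Finset

theorem Nat.cast_add_descFactorial {R : Type*} [Ring R] (m n k : ℕ) :
    ((m + n).descFactorial k : R) = ∑ ij ∈ antidiagonal k,
      (k.choose ij.1 : R) * (m.descFactorial ij.1 * n.descFactorial ij.2) := by
  simp_rw [← Polynomial.descPochhammer_smeval_eq_descFactorial, Nat.cast_add]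
  exact Ring.descPochhammer_smeval_add k (Nat.cast_commute m (n : R))

theorem hasSum_descFactorial_mul_pow_div_factorial (m : ℕ) (x : ℝ) :
    HasSum (fun k : ℕ => (k.descFactorial m : ℝ) * x ^ k / k.factorial) (x ^ m * Real.exp x) := by
  have hexp : HasSum (fun j : ℕ => x ^ j / j.factorial) (Real.exp x) :=
    Real.exp_eq_exp_ℝ ▸ NormedSpace.expSeries_div_hasSum_exp x
  have hshift (j : ℕ) : x ^ m * (x ^ j / j.factorial)
      = ((j + m).descFactorial m : ℝ) * x ^ (j + m) / (j + m).factorial := by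
    have hfact : ((j + m).factorial : ℝ) = j.factorial * (j + m).descFactorial m := by
      have h := Nat.factorial_mul_descFactorial (Nat.le_add_left m j)
      rw [Nat.add_sub_cancel] at h
      exact_mod_cast h.symm
    rw [hfact, pow_add]
    field_simp
  have hvanish : ∑ k ∈ range m, (k.descFactorial m : ℝ) * x ^ k / k.factorial = 0 :=
    sum_eq_zero fun k hk => by simp [Nat.descFactorial_eq_zero_iff_lt.mpr (mem_range.mp hk)]
  rw [← hasSum_nat_add_iff' m, hvanish, sub_zero]
  simpa only [hshift] using hexp.mul_left (x ^ m)

theorem hasSum_add_descFactorial_mul_pow_div_factorial (r n : ℕ) (x : ℝ) :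
    HasSum (fun k : ℕ => ((k + r).descFactorial n : ℝ) * x ^ k / k.factorial)
      ((∑ ij ∈ antidiagonal n, (n.choose ij.1 : ℝ) * r.descFactorial ij.1 * x ^ ij.2) *
        Real.exp x) := by
  have hterm (k : ℕ) : ((k + r).descFactorial n : ℝ) * x ^ k / k.factorial
      = ∑ ij ∈ antidiagonal n, (n.choose ij.1 : ℝ) * r.descFactorial ij.1 *
          ((k.descFactorial ij.2 : ℝ) * x ^ k / k.factorial) := by
    rw [add_comm, Nat.cast_add_descFactorial, sum_mul, sum_div]
    exact sum_congr rfl fun ij _ => by ring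
  simp only [hterm, sum_mul]
  exact hasSum_sum fun (ij : ℕ × ℕ) _ => by
    simpa only [mul_assoc] using (hasSum_descFactorial_mul_pow_div_factorial ij.2 x).mul_left
      ((n.choose ij.1 : ℝ) * r.descFactorial ij.1)

/-- The umbral identity `(B_x + r)_n = ∑_{j=0}^{min(n,r)} C(n,j) (r)_j x^{n−j}`:
for all `n`, `r` and real `x`,
`e^{-x} ∑_{k ≥ 0} (k+r)_n x^k / k! = ∑_{j=0}^{min(n,r)} C(n,j) (r)_j x^{n−j}`. -/
theorem umbral_shifted_falling_factorial (n r : ℕ) (x : ℝ) :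
    Real.exp (-x) * ∑' k : ℕ, ((k + r).descFactorial n : ℝ) * x ^ k / (k.factorial : ℝ)
      = ∑ j ∈ Finset.range (min n r + 1),
          (n.choose j : ℝ) * (r.descFactorial j : ℝ) * x ^ (n - j) := by
  rw [(hasSum_add_descFactorial_mul_pow_div_factorial r n x).tsum_eq, mul_comm, mul_assoc,
    ← Real.exp_add, add_neg_cancel, Real.exp_zero, mul_one,
    Nat.sum_antidiagonal_eq_sum_range_succ fun i j => (n.choose i : ℝ) * r.descFactorial i * x ^ j]
  refine (sum_subset (range_subset_range.mpr (by omega)) fun j hjn hjr => ?_).symm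
  rw [Nat.descFactorial_eq_zero_iff_lt.mpr (by simp only [mem_range] at hjn hjr; omega)]
  simp
end

section
/- For every natural number n ≥ 1 and every nonnegative integer r, the polynomial x^r Σ_{j=0}^{min(n,r)} C(n,j) (r!/(r−j)!) x^{n−j} has only real zeros. -/
open Polynomial Finset

theorem Complex.im_mul_im_one_div_sub_neg {z a : ℂ} (hz : z.im ≠ 0) (ha : a.im = 0) :
    z.im * (1 / (z - a)).im < 0 := by
  have hpos : 0 < normSq (z - a) := normSq_pos.2 fun h ↦ hz (by simpa [ha] using congrArg im h)
  rw [one_div, inv_im, sub_im, ha, sub_zero, neg_div, mul_neg, mul_div_assoc', neg_lt_zero]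
  exact div_pos (mul_self_pos.2 hz) hpos

theorem Complex.im_multiset_sum {ι : Type*} (s : Multiset ι) (f : ι → ℂ) :
    (s.map f).sum.im = (s.map fun i ↦ (f i).im).sum := by
  simpa [Multiset.map_map] using map_multiset_sum imAddGroupHom (s.map f)

namespace RZ

theorem mul {p q : ℝ[X]} (hp : RZ p) (hq : RZ q) : RZ (p * q) := by
  intro z hz
  rw [IsRoot, Polynomial.map_mul, eval_mul] at hz
  exact (mul_eq_zero.1 hz).elim (hp z) (hq z)

theorem X_pow (k : ℕ) : RZ (X ^ k) := by
  intro z hz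
  rw [IsRoot, Polynomial.map_pow, map_X, eval_pow, eval_X] at hz
  rw [(pow_eq_zero_iff'.1 hz).1, Complex.zero_im]

theorem derivative_add {p : ℝ[X]} (hp : RZ p) : RZ (derivative p + p) := by
  intro z hz
  set q := p.map (algebraMap ℝ ℂ)
  by_cases hqz : q.eval z = 0
  · exact hp z hqz
  set S := (q.roots.map fun a ↦ 1 / (z - a)).sum
  have hS : S = -1 := by
    have h := (IsAlgClosed.splits q).eval_derivative_eq_eval_mul_sum hqz
    rw [IsRoot, Polynomial.map_add, eval_add, ← derivative_map, h] at hz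
    have h' : q.eval z * (S + 1) = 0 := by linear_combination hz
    exact eq_neg_of_add_eq_zero_left ((mul_eq_zero.1 h').resolve_left hqz)
  have hroots : q.roots ≠ 0 := by
    rintro h0
    simp [S, h0] at hS
  by_contra him
  have hneg : z.im * S.im < 0 := by
    rw [Complex.im_multiset_sum, ← Multiset.sum_map_mul_left]
    simpa using Multiset.sum_lt_sum_of_nonempty (g := fun _ ↦ (0 : ℝ)) hroots
      fun a ha ↦ Complex.im_mul_im_one_div_sub_neg him (hp a (isRoot_of_mem_roots ha))
  simp [hS] at hneg

theorem derivative_add_one_pow {p : ℝ[X]} (hp : RZ p) (k : ℕ) :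
    RZ (((derivative + 1 : Module.End ℝ ℝ[X]) ^ k) p) := by
  induction k with
  | zero => exact hp
  | succ k ih => rw [pow_succ', Module.End.mul_apply]; exact ih.derivative_add

end RZ

section

variable {R : Type*} [CommSemiring R]

theorem derivative_add_one_pow_apply (k : ℕ) (p : R[X]) :
    ((derivative + 1 : Module.End R R[X]) ^ k) p =
      ∑ j ∈ range (k + 1), k.choose j • derivative^[j] p := by
  rw [(Commute.one_right _).add_pow]
  simp [LinearMap.sum_apply, Module.End.pow_apply]

theorem derivative_add_one_pow_X_pow (k r : ℕ) :
    ((derivative + 1 : Module.End R R[X]) ^ k) (X ^ r) =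
      ∑ j ∈ range (k + 1), C ((k.choose j : R) * r.descFactorial j) * X ^ (r - j) := by
  rw [derivative_add_one_pow_apply]
  refine sum_congr rfl fun j _ ↦ ?_
  rw [iterate_derivative_X_pow_eq_C_mul, nsmul_eq_mul, ← mul_assoc, ← C_eq_natCast, ← C_mul]

theorem X_pow_mul_sum_choose_descFactorial (n r : ℕ) :
    X ^ r * ∑ j ∈ range (min n r + 1), C ((n.choose j : R) * r.descFactorial j) * X ^ (n - j) =
      X ^ n * ∑ j ∈ range (n + 1), C ((n.choose j : R) * r.descFactorial j) * X ^ (r - j) := by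
  calc _ = ∑ j ∈ range (min n r + 1),
          X ^ n * (C ((n.choose j : R) * r.descFactorial j) * X ^ (r - j)) := by
        rw [mul_sum]
        refine sum_congr rfl fun j hj ↦ ?_
        have hj : j ≤ n ∧ j ≤ r := by rw [mem_range] at hj; omega
        rw [mul_left_comm, mul_left_comm (X ^ n), ← pow_add, ← pow_add,
          show r + (n - j) = n + (r - j) by omega]
    _ = ∑ j ∈ range (n + 1), X ^ n * (C ((n.choose j : R) * r.descFactorial j) * X ^ (r - j)) := by
        refine sum_subset (range_subset_range.2 (by omega)) fun j hj hj' ↦ ?_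
        have hrj : r < j := by rw [mem_range] at hj hj'; omega
        simp [Nat.descFactorial_eq_zero_iff_lt.2 hrj]
    _ = _ := (mul_sum _ _ _).symm

end

theorem real_rooted_shifted_falling_general (n r : ℕ) :
    RZ (Polynomial.X ^ r *
      ∑ j ∈ Finset.range (min n r + 1),
        Polynomial.C ((n.choose j : ℝ) * (r.descFactorial j : ℝ)) * Polynomial.X ^ (n - j)) := by
  rw [X_pow_mul_sum_choose_descFactorial, ← derivative_add_one_pow_X_pow]
  exact (RZ.X_pow n).mul ((RZ.X_pow r).derivative_add_one_pow n)

/-- For `n ≥ 1` and any `r ≥ 0`, the polynomial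
`x^r ∑_{j=0}^{min(n,r)} C(n,j) (r!/(r−j)!) x^{n−j}` has only real zeros. -/
theorem real_rooted_shifted_falling (n r : ℕ) (hn : 1 ≤ n) :
    RZ (Polynomial.X ^ r *
      ∑ j ∈ Finset.range (min n r + 1),
        Polynomial.C ((n.choose j : ℝ) * (r.descFactorial j : ℝ)) * Polynomial.X ^ (n - j)) :=
  real_rooted_shifted_falling_general n r
end

section
/- For every natural number n ≥ 1, the Lah polynomial L_n(x) := Σ_{k=1}^{n} L(n,k) x^k, where L(n,k) = (n!/k!) C(n−1,k−1) are the Lah numbers, has only real zeros. -/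
/-- The Lah number `L(n,k) = (n!/k!) · C(n−1, k−1)`. -/
def lahNum : ℕ → ℕ → ℕ
  | 0, 0 => 1
  | 0, _ + 1 => 0
  | _ + 1, 0 => 0
  | n + 1, k + 1 => ((n + 1).factorial / (k + 1).factorial) * n.choose k

/-! The Lah polynomials satisfy `L_{n+1} = (X + n) L_n + X L_n'`, equivalently
`x · (xⁿ eˣ L_n(x))' = xⁿ eˣ L_{n+1}(x)`. By induction, `L_n` has `n` distinct roots in `(-∞, 0]`:
the function `xⁿ eˣ L_n(x)` vanishes at them and tends to `0` at `-∞`, so Rolle's theorem gives a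
root of `L_{n+1}` strictly between each of them and the preceding one (or `-∞`), and `0` is a root
of `L_{n+1}` as well. A polynomial with as many distinct real roots as its degree has only real
roots. -/

theorem lahNum_eq_zero_of_lt {n k : ℕ} (h : n < k) : lahNum n k = 0 := by
  obtain ⟨j, rfl⟩ := Nat.exists_eq_add_of_lt h
  cases n with
  | zero => rfl
  | succ m => simp [lahNum, Nat.choose_eq_zero_of_lt (by omega : m < m + 1 + j)]

@[simp]
theorem lahNum_self (n : ℕ) : lahNum n n = 1 := by
  cases n <;> simp [lahNum, Nat.div_self (Nat.factorial_pos _)]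

theorem lahNum_succ_succ_mul_factorial (n k : ℕ) :
    lahNum (n + 1) (k + 1) * (k + 1).factorial = (n + 1).factorial * n.choose k := by
  rcases le_or_gt k n with h | h
  · rw [lahNum, mul_right_comm,
      Nat.div_mul_cancel (Nat.factorial_dvd_factorial (Nat.succ_le_succ h))]
  · simp [lahNum, Nat.choose_eq_zero_of_lt h]

theorem lahNum_succ_succ (n k : ℕ) :
    lahNum (n + 1) (k + 1) = lahNum n k + (n + k + 1) * lahNum n (k + 1) := by
  rcases n with _ | m
  · cases k <;> simp [lahNum]
  rcases k with _ | j
  · simp [lahNum, Nat.factorial_succ]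
  apply Nat.eq_of_mul_eq_mul_right (Nat.factorial_pos (j + 2))
  -- after Pascal's rule, the recurrence is `(m - j) C(m, j) = (j + 1) C(m, j + 1)`
  have key : m.choose (j + 1) * (j + 1) + m.choose j * j = m.choose j * m := by
    rcases le_or_gt j m with h | h
    · rw [Nat.choose_succ_right_eq, ← mul_add, Nat.sub_add_cancel h]
    · simp [Nat.choose_eq_zero_of_lt h, Nat.choose_eq_zero_of_lt (Nat.lt_succ_of_lt h)]
  rw [add_mul, mul_assoc, lahNum_succ_succ_mul_factorial, lahNum_succ_succ_mul_factorial,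
    Nat.factorial_succ (j + 1), ← mul_assoc, mul_right_comm, lahNum_succ_succ_mul_factorial,
    Nat.factorial_succ (m + 1), Nat.choose_succ_succ]
  linear_combination (m + 1).factorial * key.symm

open Polynomial

noncomputable def lahPoly (R : Type*) [Semiring R] (n : ℕ) : R[X] :=
  ∑ k ∈ Finset.range (n + 1), C (lahNum n k : R) * X ^ k

section
variable {R : Type*}

@[simp]
theorem coeff_lahPoly [Semiring R] (n k : ℕ) : (lahPoly R n).coeff k = lahNum n k := by
  simp only [lahPoly, finsetSum_coeff, coeff_C_mul_X_pow, Finset.sum_ite_eq, Finset.mem_range]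
  split_ifs with h
  · rfl
  · rw [lahNum_eq_zero_of_lt (by omega), Nat.cast_zero]

theorem lahPoly_succ [CommSemiring R] (n : ℕ) :
    lahPoly R (n + 1) = (X + C (n : R)) * lahPoly R n + X * derivative (lahPoly R n) := by
  ext (_ | k)
  · cases n <;> simp [lahNum]
  · simp only [coeff_lahPoly, coeff_add, add_mul, coeff_X_mul, coeff_C_mul, coeff_derivative,
      lahNum_succ_succ]
    push_cast
    ring

theorem natDegree_lahPoly [Semiring R] [Nontrivial R] (n : ℕ) : (lahPoly R n).natDegree = n :=
  natDegree_eq_of_le_of_coeff_ne_zero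
    (natDegree_le_iff_coeff_eq_zero.2 fun _ h => by simp [lahNum_eq_zero_of_lt h])
    (by simp)

theorem monic_lahPoly [Semiring R] [Nontrivial R] (n : ℕ) : (lahPoly R n).Monic := by
  rw [Monic, leadingCoeff, natDegree_lahPoly, coeff_lahPoly, lahNum_self, Nat.cast_one]

theorem sum_Icc_eq_lahPoly [Semiring R] {n : ℕ} (hn : 1 ≤ n) :
    ∑ k ∈ Finset.Icc 1 n, C (lahNum n k : R) * X ^ k = lahPoly R n := by
  obtain ⟨m, rfl⟩ := Nat.exists_eq_add_of_le' hn
  rw [lahPoly, Nat.range_succ_eq_Icc_zero,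
    ← Finset.insert_Icc_add_one_left_eq_Icc (Nat.zero_le _), Finset.sum_insert (by simp)]
  simp [lahNum]
end

open Filter Topology Set

theorem exists_lt_hasDerivAt_eq_zero_of_tendsto_atBot {f f' : ℝ → ℝ} {b : ℝ}
    (hfc : ContinuousOn f (Iic b)) (hff' : ∀ x < b, HasDerivAt f (f' x) x) (hfb : f b = 0)
    (hf : Tendsto f atBot (𝓝 0)) : ∃ c < b, f' c = 0 := by
  by_cases hzero : ∀ x < b, f x = 0
  · have hloc : f =ᶠ[𝓝 (b - 1)] fun _ => 0 :=
      eventually_of_mem (Iio_mem_nhds (by linarith)) hzero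
    exact ⟨b - 1, by linarith,
      (hff' _ (by linarith)).unique ((hasDerivAt_const _ _).congr_of_eventuallyEq hloc)⟩
  push Not at hzero
  obtain ⟨x₀, hx₀b, hx₀⟩ := hzero
  wlog hpos : 0 < f x₀ generalizing f f'
  · obtain ⟨c, hcb, hc⟩ := this (f := -f) (f' := -f') hfc.neg (fun x hx => (hff' x hx).neg)
      (by simp [hfb]) (by rw [← neg_zero]; exact hf.neg) (by simpa using hx₀)
      (by simpa using lt_of_le_of_ne (not_lt.1 hpos) hx₀)
    exact ⟨c, hcb, by simpa using hc⟩
  obtain ⟨a, hfa, hax₀⟩ :=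
    ((hf.eventually (gt_mem_nhds hpos)).and (eventually_lt_atBot x₀)).exists
  obtain ⟨c, hc, hmax⟩ := isCompact_Icc.exists_isMaxOn (nonempty_Icc.2 (hax₀.trans hx₀b).le)
    (hfc.mono Icc_subset_Iic_self)
  have hx₀c : f x₀ ≤ f c := hmax ⟨hax₀.le, hx₀b.le⟩
  have hca : a < c := lt_of_le_of_ne hc.1 (by rintro rfl; linarith)
  have hcb : c < b := lt_of_le_of_ne hc.2 (by rintro rfl; linarith)
  exact ⟨c, hcb, (hmax.isLocalMax (Icc_mem_nhds hca hcb)).hasDerivAt_eq_zero (hff' c hcb)⟩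

theorem exists_finset_card_eq_hasDerivAt_eq_zero {f f' : ℝ → ℝ}
    (hff' : ∀ x, HasDerivAt f (f' x) x) (hf : Tendsto f atBot (𝓝 0)) {S : Finset ℝ}
    (hS : ∀ s ∈ S, f s = 0) :
    ∃ T : Finset ℝ, T.card = S.card ∧ ∀ t ∈ T, f' t = 0 ∧ ∃ s ∈ S, t < s := by
  have hcont : Continuous f := continuous_iff_continuousAt.2 fun x => (hff' x).continuousAt
  have hgap : ∀ s ∈ S, ∃ c < s, f' c = 0 ∧ ∀ s' ∈ S, s' < s → s' < c := by
    intro s hs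
    by_cases hbelow : (S.filter (· < s)).Nonempty
    · have ha := Finset.mem_filter.1 ((S.filter (· < s)).max'_mem hbelow)
      obtain ⟨c, hc, hc0⟩ := exists_hasDerivAt_eq_zero ha.2 hcont.continuousOn
        ((hS _ ha.1).trans (hS s hs).symm) fun x _ => hff' x
      exact ⟨c, hc.2, hc0, fun s' hs' hs's =>
        ((S.filter (· < s)).le_max' s' (Finset.mem_filter.2 ⟨hs', hs's⟩)).trans_lt hc.1⟩
    · obtain ⟨c, hc, hc0⟩ := exists_lt_hasDerivAt_eq_zero_of_tendsto_atBot hcont.continuousOn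
        (fun x _ => hff' x) (hS s hs) hf
      exact ⟨c, hc, hc0, fun s' hs' hs's =>
        absurd ⟨s', Finset.mem_filter.2 ⟨hs', hs's⟩⟩ hbelow⟩
  -- `c` is injective since no point of `S` lies in `(c s, s)`
  choose! c hcs hc0 hcgap using hgap
  refine ⟨S.image c, Finset.card_image_of_injOn fun s hs s' hs' hcss' => ?_, ?_⟩
  · rcases lt_trichotomy s s' with h | h | h
    · linarith [hcgap s' hs' s hs h, hcs s hs]
    · exact h
    · linarith [hcgap s hs s' hs' h, hcs s' hs']
  · simp only [Finset.mem_image]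
    rintro _ ⟨s, hs, rfl⟩
    exact ⟨hc0 s hs, s, hs, hcs s hs⟩

namespace Polynomial

theorem tendsto_eval_mul_exp_atBot (p : ℝ[X]) :
    Tendsto (fun x => p.eval x * Real.exp x) atBot (𝓝 0) := by
  refine ((p.comp (-X)).tendsto_div_exp_atTop.comp tendsto_neg_atBot_atTop).congr fun x => ?_
  simp [eval_comp, Real.exp_neg, div_eq_mul_inv]

theorem exists_neg_isRoot_X_add_C_mul_add_X_mul_derivative (n : ℕ) {P : ℝ[X]} {S : Finset ℝ}
    (hS : ∀ s ∈ S, s ≤ 0 ∧ P.IsRoot s) :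
    ∃ T : Finset ℝ, T.card = S.card ∧
      ∀ t ∈ T, t < 0 ∧ ((X + C (n : ℝ)) * P + X * derivative P).IsRoot t := by
  set Q := (X + C (n : ℝ)) * P + X * derivative P
  set g' : ℝ → ℝ := fun x => (n * x ^ (n - 1) * Real.exp x + x ^ n * Real.exp x) * P.eval x +
    x ^ n * Real.exp x * (derivative P).eval x
  have hg : ∀ x, HasDerivAt (fun x => x ^ n * Real.exp x * P.eval x) (g' x) x := fun x =>
    ((hasDerivAt_pow n x).mul (Real.hasDerivAt_exp x)).mul (P.hasDerivAt x)
  have hg' : ∀ x, x * g' x = x ^ n * Real.exp x * Q.eval x := by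
    intro x
    rcases n with _ | m <;> simp [Q, g'] <;> ring
  have hlim : Tendsto (fun x => x ^ n * Real.exp x * P.eval x) atBot (𝓝 0) :=
    (X ^ n * P).tendsto_eval_mul_exp_atBot.congr fun x => by simp; ring
  obtain ⟨T, hcard, hT⟩ := exists_finset_card_eq_hasDerivAt_eq_zero hg hlim fun s hs => by
    simp [(hS s hs).2.eq_zero]
  refine ⟨T, hcard, fun t ht => ?_⟩
  obtain ⟨ht0, s, hs, hts⟩ := hT t ht
  have hneg : t < 0 := hts.trans_le (hS s hs).1
  have hQ : t ^ n * Real.exp t * Q.eval t = 0 := by rw [← hg', ht0, mul_zero]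
  exact ⟨hneg, by simpa [hneg.ne, Real.exp_ne_zero] using hQ⟩

end Polynomial

theorem RZ.of_natDegree_le_card {P : ℝ[X]} (hP : P ≠ 0) {S : Finset ℝ}
    (hS : ∀ s ∈ S, P.IsRoot s) (hcard : P.natDegree ≤ S.card) : RZ P := by
  have hsub : S ⊆ P.roots.toFinset := fun s hs =>
    Multiset.mem_toFinset.2 ((mem_roots hP).2 (hS s hs))
  have hroots : Multiset.card P.roots = P.natDegree := le_antisymm (card_roots' P)
    (hcard.trans ((Finset.card_le_card hsub).trans (Multiset.toFinset_card_le _)))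
  intro z hz
  rw [← mem_roots (Polynomial.map_ne_zero hP),
    ← roots_map_of_injective_of_card_eq_natDegree (algebraMap ℝ ℂ).injective hroots] at hz
  obtain ⟨r, -, rfl⟩ := Multiset.mem_map.1 hz
  exact Complex.ofReal_im r

theorem exists_nonpos_roots_lahPoly (n : ℕ) :
    ∃ S : Finset ℝ, S.card = n ∧ ∀ s ∈ S, s ≤ 0 ∧ (lahPoly ℝ n).IsRoot s := by
  induction n with
  | zero => exact ⟨∅, rfl, by simp⟩
  | succ n ih =>
    obtain ⟨S, hcard, hS⟩ := ih
    obtain ⟨T, hTcard, hT⟩ := exists_neg_isRoot_X_add_C_mul_add_X_mul_derivative n hS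
    refine ⟨insert 0 T, ?_, ?_⟩
    · rw [Finset.card_insert_of_notMem fun h => (hT 0 h).1.false, hTcard, hcard]
    · simp only [Finset.mem_insert, forall_eq_or_imp]
      refine ⟨⟨le_rfl, ?_⟩, fun t ht =>
        ⟨(hT t ht).1.le, by rw [lahPoly_succ]; exact (hT t ht).2⟩⟩
      simp [IsRoot, ← coeff_zero_eq_eval_zero, lahNum]

/-- For `n ≥ 1`, the Lah polynomial `L_n(x) = ∑_{k=1}^n L(n,k) x^k` has only real zeros. -/
theorem lah_polynomial_real_rooted (n : ℕ) (hn : 1 ≤ n) :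
    RZ (∑ k ∈ Finset.Icc 1 n, Polynomial.C (lahNum n k : ℝ) * Polynomial.X ^ k) := by
  rw [sum_Icc_eq_lahPoly hn]
  obtain ⟨S, hcard, hS⟩ := exists_nonpos_roots_lahPoly n
  exact RZ.of_natDegree_le_card (monic_lahPoly n).ne_zero (fun s hs => (hS s hs).2)
    (by rw [natDegree_lahPoly, hcard])
end

section
/- For n ≥ 1 and r ≥ 0, the polynomial x^r ( x·B_{n−1,r}(x) + r·B_{n−1,r−1}(x) ) has only real zeros, where B_{m,s}(x) denotes the s-Bell polynomial (and the term r·B_{n−1,r−1} is omitted when r = 0). -/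
/-- `rStirlingShift r m k = S_r(m + r, k + r)`, the `r`-Stirling numbers of the second
kind (shifted indexing), via the recurrence `S_r(m+1+r, k+r) = (k+r) S_r(m+r, k+r) +
S_r(m+r, k-1+r)` with `S_r(r, k+r) = δ_{k,0}`. -/
def rStirlingShift (r : ℕ) : ℕ → ℕ → ℕ
  | 0, 0 => 1
  | 0, _ + 1 => 0
  | m + 1, k =>
      (k + r) * rStirlingShift r m k +
        (match k with
          | 0 => 0
          | k' + 1 => rStirlingShift r m k')

/-- The `r`-Bell polynomial `B_{m,r}(x) = ∑_{k=0}^m S_r(m+r, k+r) x^k`. -/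
noncomputable def rBellPoly (r m : ℕ) : Polynomial ℝ :=
  ∑ k ∈ Finset.range (m + 1), Polynomial.C (rStirlingShift r m k : ℝ) * Polynomial.X ^ k

/-!
Call `p` admissible (`IsXPowMulNegNodal p`) if `p = X ^ j * ∏_{a ∈ s} (X - a)` for a finite
set `s` of negative reals, and put `L_c p = (X + c) p + X p'`. The `r`-Bell polynomials satisfy
`B_{s,m+1} = L_s B_{s,m}` and `B_{s+1,m} = B_{s,m} + B'_{s,m}` (hence `B_{0,m+1} = X B_{1,m}`),
so the polynomial in question is `X ^ r * L_r B_{r-1,n-1}`, or `X * B_{0,n-1}` when `r = 0`.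
Everything thus reduces to: `L_c` preserves admissibility for `c > 0`. As
`L_c (X ^ j q) = X ^ j L_{c+j} q`, take `j = 0`. Then `L_c p` is monic of degree `#s + 1`, equals
`a p'(a)` at `a ∈ s` and `c p(0) > 0` at `0`, so it alternates in sign along `s ∪ {0}` preceded
by a point far to the left, and the intermediate value theorem gives `#s + 1` distinct negative
roots.
-/

open Polynomial Lagrange Filter Finset Asymptotics

theorem Polynomial.Monic.eventually_atBot_neg_one_pow_mul_eval_pos {P : ℝ[X]} (hP : P.Monic)
    (hd : 0 < P.natDegree) : ∀ᶠ x in atBot, 0 < (-1) ^ P.natDegree * P.eval x := by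
  have hlead : ∀ x : ℝ,
      (-1) ^ P.natDegree * (P.leadingCoeff * x ^ P.natDegree) = (-x) ^ P.natDegree := by
    intro x
    rw [hP.leadingCoeff, one_mul, neg_pow x]
  have hequiv : (fun x => (-1) ^ P.natDegree * P.eval x) ~[atBot] fun x => (-x) ^ P.natDegree :=
    ((IsEquivalent.refl (u := fun _ : ℝ => (-1 : ℝ) ^ P.natDegree)).mul
      P.isEquivalent_atBot_lead).congr_right (Eventually.of_forall hlead)
  exact (hequiv.symm.tendsto_atTop
    ((tendsto_pow_atTop hd.ne').comp tendsto_neg_atBot_atTop)).eventually_gt_atTop 0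

theorem Polynomial.Monic.eq_nodal_of_isRoot {R : Type*} [CommRing R] [IsDomain R] {p : R[X]}
    (hp : p.Monic) (Z : Finset R) (hdeg : p.natDegree ≤ #Z) (hZ : ∀ z ∈ Z, p.IsRoot z) :
    p = nodal Z id := by
  have hle : Z.val ≤ p.roots :=
    (Multiset.le_iff_subset Z.nodup).mpr fun z hz => (mem_roots hp.ne_zero).mpr (hZ z hz)
  have hroots : Z.val = p.roots :=
    Multiset.eq_of_le_of_card_le hle ((card_roots' p).trans hdeg)
  rw [nodal_eq, Finset.prod_eq_multiset_prod, ← prod_multiset_X_sub_C_of_monic_of_roots_card_eq hp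
    (le_antisymm (card_roots' p) (hdeg.trans (by rw [← hroots]; rfl)))]
  simp [hroots]

section MulAddXMulDerivative

variable {R : Type*} [CommRing R] [Nontrivial R] {p : R[X]}

theorem degree_X_mul_derivative_lt (hp : p.Monic) (c : R) :
    (X * derivative p).degree < ((X + C c) * p).degree := by
  rw [mul_comm X, degree_mul_X, hp.degree_mul, degree_X_add_C, add_comm 1]
  exact WithBot.add_lt_add_right (by simp) (degree_derivative_lt hp.ne_zero)

theorem Polynomial.Monic.mul_add_X_mul_derivative (hp : p.Monic) (c : R) :
    ((X + C c) * p + X * derivative p).Monic :=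
  ((monic_X_add_C c).mul hp).add_of_left (degree_X_mul_derivative_lt hp c)

theorem natDegree_mul_add_X_mul_derivative (hp : p.Monic) (c : R) :
    ((X + C c) * p + X * derivative p).natDegree = p.natDegree + 1 := by
  rw [natDegree_add_eq_left_of_degree_lt (degree_X_mul_derivative_lt hp c),
    (monic_X_add_C c).natDegree_mul hp, natDegree_X_add_C, add_comm]

end MulAddXMulDerivative

theorem mul_add_X_mul_derivative_X_pow_mul {R : Type*} [CommRing R] (c : R) (j : ℕ) (q : R[X]) :
    (X + C c) * (X ^ j * q) + X * derivative (X ^ j * q) =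
      X ^ j * ((X + C (c + j)) * q + X * derivative q) := by
  cases j with
  | zero => simp
  | succ j =>
    simp only [derivative_mul, derivative_X_pow, Nat.add_sub_cancel, map_add,
      map_natCast, C_1, Nat.cast_succ]
    ring

def SignAlternatingOn (g : ℝ → ℝ) (S : Finset ℝ) : Prop :=
  ∀ y ∈ S, 0 < (-1) ^ #{x ∈ S | y < x} * g y

theorem SignAlternatingOn.exists_zeros {g : ℝ → ℝ} {S : Finset ℝ}
    (hS : SignAlternatingOn g S) (hg : Continuous g) :
    ∃ Z : Finset ℝ, #S ≤ #Z + 1 ∧ ∀ z ∈ Z, g z = 0 ∧ ∃ y ∈ S, z < y := by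
  induction S using Finset.induction_on_max generalizing g with
  | empty => exact ⟨∅, by simp, by simp⟩
  | insert b S hb ih =>
    have hfilter : ∀ y ∈ S, {x ∈ insert b S | y < x} = insert b {x ∈ S | y < x} :=
      fun y hy => by rw [filter_insert, if_pos (hb y hy)]
    obtain ⟨Z, hcard, hZ⟩ := ih (g := -g) (fun y hy => by
      have hy' := hS y (mem_insert_of_mem hy)
      rw [hfilter y hy, card_insert_of_notMem fun h => (hb b (mem_filter.mp h).1).false,
        pow_succ] at hy'
      simp only [Pi.neg_apply]
      linarith) hg.neg
    rcases S.eq_empty_or_nonempty with rfl | hne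
    · exact ⟨∅, by simp, by simp⟩
    set a := S.max' hne
    have hga : g a < 0 := by
      have ha := hS a (mem_insert_of_mem (S.max'_mem hne))
      rw [hfilter a (S.max'_mem hne),
        filter_false_of_mem fun x hx => not_lt.mpr (S.le_max' x hx)] at ha
      simpa using ha
    have hgb : 0 < g b := by
      have hb' := hS b (mem_insert_self b S)
      rwa [filter_false_of_mem fun x hx => ?_, card_empty, pow_zero, one_mul] at hb'
      rcases mem_insert.mp hx with rfl | hx
      · exact lt_irrefl _
      · exact (hb x hx).not_gt
    obtain ⟨z, ⟨haz, hzb⟩, hgz⟩ := intermediate_value_Ioo (hb a (S.max'_mem hne)).le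
      hg.continuousOn ⟨hga, hgb⟩
    have hzZ : z ∉ Z := fun hz => by
      obtain ⟨y, hy, hzy⟩ := (hZ z hz).2
      exact (hzy.trans_le (S.le_max' y hy)).not_gt haz
    refine ⟨insert z Z, ?_, ?_⟩
    · rw [card_insert_of_notMem hzZ, card_insert_of_notMem fun h => (hb b h).false]
      omega
    · intro x hx
      rcases mem_insert.mp hx with rfl | hx
      · exact ⟨hgz, b, mem_insert_self b S, hzb⟩
      · obtain ⟨h0, y, hy, hxy⟩ := hZ x hx
        exact ⟨neg_eq_zero.mp h0, y, mem_insert_of_mem hy, hxy⟩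

theorem neg_one_pow_card_filter_lt_mul_prod_sub_pos {t : Finset ℝ} {a : ℝ} (ha : a ∉ t) :
    0 < (-1) ^ #{x ∈ t | a < x} * ∏ x ∈ t, (a - x) := by
  rw [← prod_filter_mul_prod_filter_not t (a < ·), ← mul_assoc, ← prod_const,
    ← prod_mul_distrib]
  refine mul_pos (prod_pos fun x hx => ?_) (prod_pos fun x hx => ?_)
  · linarith [(mem_filter.mp hx).2]
  · obtain ⟨hxt, hax⟩ := mem_filter.mp hx
    have hxa : x < a := lt_of_le_of_ne (not_lt.mp hax) fun h => ha (h ▸ hxt)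
    linarith

theorem neg_one_pow_card_filter_lt_mul_eval_derivative_nodal_pos {s : Finset ℝ} {a : ℝ}
    (ha : a ∈ s) : 0 < (-1) ^ #{x ∈ s | a < x} * (derivative (nodal s id)).eval a := by
  have h := neg_one_pow_card_filter_lt_mul_prod_sub_pos (notMem_erase a s)
  rw [filter_erase, erase_eq_of_notMem (by simp)] at h
  rwa [← id_eq a, eval_nodal_derivative_eval_node_eq ha, eval_nodal]

theorem signAlternatingOn_mul_add_X_mul_derivative_nodal {s : Finset ℝ} (hs : ∀ a ∈ s, a < 0)
    {c : ℝ} (hc : 0 < c) {M : ℝ} (hMs : ∀ a ∈ insert 0 s, M < a)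
    (hMT : 0 < (-1) ^ (#s + 1) *
      ((X + C c) * nodal s id + X * derivative (nodal s id)).eval M) :
    SignAlternatingOn ((X + C c) * nodal s id + X * derivative (nodal s id)).eval
      (insert M (insert 0 s)) := by
  set p := nodal s id
  have hevalT : ∀ y, ((X + C c) * p + X * derivative p).eval y =
      (y + c) * p.eval y + y * (derivative p).eval y := by
    simp
  have h0s : (0 : ℝ) ∉ s := fun h => (hs 0 h).false
  intro y hy
  beta_reduce
  rcases mem_insert.mp hy with rfl | hy
  · rwa [filter_insert, if_neg (lt_irrefl y), filter_true_of_mem fun x hx => hMs x hx,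
      card_insert_of_notMem h0s]
  rcases mem_insert.mp hy with rfl | ha
  · have hfilter : {x ∈ insert M (insert 0 s) | (0 : ℝ) < x} = ∅ := by
      rw [filter_insert, if_neg (hMs 0 (mem_insert_self 0 s)).not_gt, filter_insert,
        if_neg (lt_irrefl 0), filter_false_of_mem fun x hx => (hs x hx).not_gt]
    rw [hfilter, card_empty, pow_zero, one_mul, hevalT, eval_nodal, zero_add, zero_mul, add_zero]
    exact mul_pos hc (prod_pos fun x hx => by simp [hs x hx])
  · have hfilter : {x ∈ insert M (insert 0 s) | y < x} = insert 0 {x ∈ s | y < x} := by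
      rw [filter_insert, if_neg (hMs y (mem_insert_of_mem ha)).not_gt, filter_insert,
        if_pos (hs y ha)]
    have hpy : p.eval y = 0 := eval_nodal_at_node (v := id) ha
    rw [hfilter, card_insert_of_notMem (by simp [h0s]), pow_succ, hevalT, hpy]
    have hderiv := neg_one_pow_card_filter_lt_mul_eval_derivative_nodal_pos ha
    have hy0 := hs y ha
    nlinarith

theorem exists_neg_nodal_eq_mul_add_X_mul_derivative {s : Finset ℝ} (hs : ∀ a ∈ s, a < 0)
    {c : ℝ} (hc : 0 < c) : ∃ t : Finset ℝ, (∀ a ∈ t, a < 0) ∧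
      (X + C c) * nodal s id + X * derivative (nodal s id) = nodal t id := by
  have hpmonic : (nodal s id).Monic := nodal_monic
  have hTmonic := hpmonic.mul_add_X_mul_derivative c
  have hTdeg := natDegree_mul_add_X_mul_derivative hpmonic c
  rw [natDegree_nodal] at hTdeg
  obtain ⟨M, hMT, hMs⟩ := ((hTmonic.eventually_atBot_neg_one_pow_mul_eval_pos (by omega)).and
    ((eventually_all_finset (insert 0 s)).mpr fun a _ => eventually_lt_atBot a)).exists
  rw [hTdeg] at hMT
  obtain ⟨Z, hcard, hZ⟩ :=
    (signAlternatingOn_mul_add_X_mul_derivative_nodal hs hc hMs hMT).exists_zeros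
      (Polynomial.continuous _)
  have hScard : #(insert M (insert 0 s)) = #s + 2 := by
    rw [card_insert_of_notMem fun h => (hMs M h).false,
      card_insert_of_notMem fun h => (hs 0 h).false]
  refine ⟨Z, fun z hz => ?_, hTmonic.eq_nodal_of_isRoot Z (by omega) fun z hz => (hZ z hz).1⟩
  obtain ⟨y, hy, hzy⟩ := (hZ z hz).2
  rcases mem_insert.mp hy with rfl | hy
  · exact hzy.trans (hMs 0 (mem_insert_self 0 s))
  rcases mem_insert.mp hy with rfl | hy
  · exact hzy
  · exact hzy.trans (hs y hy)

def IsXPowMulNegNodal (p : ℝ[X]) : Prop :=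
  ∃ (j : ℕ) (s : Finset ℝ), (∀ a ∈ s, a < 0) ∧ p = X ^ j * nodal s id

namespace IsXPowMulNegNodal

theorem one : IsXPowMulNegNodal 1 := ⟨0, ∅, by simp, by simp⟩

theorem X_pow_mul {p : ℝ[X]} (hp : IsXPowMulNegNodal p) (k : ℕ) :
    IsXPowMulNegNodal (X ^ k * p) := by
  obtain ⟨j, s, hs, rfl⟩ := hp
  exact ⟨k + j, s, hs, by ring⟩

theorem rz {p : ℝ[X]} (hp : IsXPowMulNegNodal p) : RZ p := by
  obtain ⟨j, s, -, rfl⟩ := hp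
  intro z hz
  simp only [nodal_eq, Polynomial.map_mul, Polynomial.map_pow, Polynomial.map_prod,
    Polynomial.map_sub, map_X, map_C, IsRoot, eval_mul, eval_pow, eval_X, eval_prod, eval_sub,
    eval_C, mul_eq_zero, pow_eq_zero_iff', Finset.prod_eq_zero_iff, sub_eq_zero] at hz
  rcases hz with ⟨rfl, -⟩ | ⟨a, -, rfl⟩ <;> simp

theorem mul_add_X_mul_derivative {p : ℝ[X]} (hp : IsXPowMulNegNodal p) {c : ℝ} (hc : 0 < c) :
    IsXPowMulNegNodal ((X + C c) * p + X * derivative p) := by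
  obtain ⟨j, s, hs, rfl⟩ := hp
  obtain ⟨t, ht, hst⟩ := exists_neg_nodal_eq_mul_add_X_mul_derivative hs
    (by positivity : 0 < c + j)
  exact ⟨j, t, ht, by rw [mul_add_X_mul_derivative_X_pow_mul, hst]⟩

end IsXPowMulNegNodal

theorem rStirlingShift_succ_succ (r m k : ℕ) : rStirlingShift r (m + 1) (k + 1) =
    (k + 1 + r) * rStirlingShift r m (k + 1) + rStirlingShift r m k := rfl

theorem rStirlingShift_succ_zero (r m : ℕ) :
    rStirlingShift r (m + 1) 0 = r * rStirlingShift r m 0 := by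
  simp [rStirlingShift]

theorem rStirlingShift_eq_zero_of_lt {r m k : ℕ} (h : m < k) : rStirlingShift r m k = 0 := by
  induction m generalizing k with
  | zero => obtain ⟨k, rfl⟩ := Nat.exists_eq_succ_of_ne_zero h.ne'; rfl
  | succ m ih =>
    obtain ⟨k, rfl⟩ := Nat.exists_eq_succ_of_ne_zero (by omega : k ≠ 0)
    rw [rStirlingShift_succ_succ, ih (by omega), ih (by omega), mul_zero]

theorem rStirlingShift_succ_left (r m k : ℕ) : rStirlingShift (r + 1) m k =
    rStirlingShift r m k + (k + 1) * rStirlingShift r m (k + 1) := by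
  induction m generalizing k with
  | zero =>
    cases k with
    | zero => simp [rStirlingShift]
    | succ k => simp [rStirlingShift_eq_zero_of_lt]
  | succ m ih =>
    cases k with
    | zero => simp only [rStirlingShift_succ_zero, rStirlingShift_succ_succ, ih]; ring
    | succ k => simp only [rStirlingShift_succ_succ, ih]; ring

theorem coeff_rBellPoly (r m k : ℕ) : (rBellPoly r m).coeff k = rStirlingShift r m k := by
  rw [rBellPoly, finsetSum_coeff]
  simp only [coeff_C_mul, coeff_X_pow, mul_ite, mul_one, mul_zero, Finset.sum_ite_eq,
    Finset.mem_range]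
  split_ifs with h
  · rfl
  · rw [rStirlingShift_eq_zero_of_lt (by omega), Nat.cast_zero]

theorem rBellPoly_zero_right (r : ℕ) : rBellPoly r 0 = 1 := by
  ext k
  rw [coeff_rBellPoly, coeff_one]
  cases k with
  | zero => simp [rStirlingShift]
  | succ k => simp [rStirlingShift]

theorem rBellPoly_succ_right (r m : ℕ) : rBellPoly r (m + 1) =
    (X + C (r : ℝ)) * rBellPoly r m + X * derivative (rBellPoly r m) := by
  ext k
  cases k with
  | zero =>
    simp only [add_mul, coeff_add, coeff_C_mul, coeff_rBellPoly, coeff_X_mul_zero,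
      rStirlingShift_succ_zero]
    push_cast
    ring
  | succ k =>
    simp only [add_mul, coeff_add, coeff_C_mul, coeff_X_mul, coeff_derivative, coeff_rBellPoly,
      rStirlingShift_succ_succ]
    push_cast
    ring

theorem rBellPoly_succ_left (r m : ℕ) :
    rBellPoly (r + 1) m = rBellPoly r m + derivative (rBellPoly r m) := by
  ext k
  rw [coeff_add, coeff_derivative, coeff_rBellPoly, coeff_rBellPoly, coeff_rBellPoly,
    rStirlingShift_succ_left]
  push_cast
  ring

theorem isXPowMulNegNodal_rBellPoly_succ (r m : ℕ) : IsXPowMulNegNodal (rBellPoly (r + 1) m) := by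
  induction m with
  | zero => simpa [rBellPoly_zero_right] using IsXPowMulNegNodal.one
  | succ m ih =>
    rw [rBellPoly_succ_right]
    exact ih.mul_add_X_mul_derivative (by positivity)

theorem isXPowMulNegNodal_rBellPoly (r m : ℕ) : IsXPowMulNegNodal (rBellPoly r m) := by
  rcases r with _ | r
  · rcases m with _ | m
    · simpa [rBellPoly_zero_right] using IsXPowMulNegNodal.one
    · have hB : rBellPoly 0 (m + 1) = X ^ 1 * rBellPoly 1 m := by
        rw [rBellPoly_succ_right, rBellPoly_succ_left, Nat.cast_zero, map_zero, add_zero]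
        ring
      rw [hB]
      exact (isXPowMulNegNodal_rBellPoly_succ 0 m).X_pow_mul 1
  · exact isXPowMulNegNodal_rBellPoly_succ r m

theorem sigma_tree_union_complete_real_rooted_general (n r : ℕ) :
    RZ (Polynomial.X ^ r *
      (Polynomial.X * rBellPoly r (n - 1) +
        Polynomial.C (r : ℝ) * rBellPoly (r - 1) (n - 1))) := by
  generalize n - 1 = m
  cases r with
  | zero => simpa using ((isXPowMulNegNodal_rBellPoly 0 m).X_pow_mul 1).rz
  | succ r =>
    have hinner : X * rBellPoly (r + 1) m + C ((r + 1 : ℕ) : ℝ) * rBellPoly r m =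
        (X + C ((r + 1 : ℕ) : ℝ)) * rBellPoly r m + X * derivative (rBellPoly r m) := by
      rw [rBellPoly_succ_left, map_natCast]
      ring
    rw [Nat.add_sub_cancel, hinner]
    exact (((isXPowMulNegNodal_rBellPoly r m).mul_add_X_mul_derivative
      (by positivity)).X_pow_mul (r + 1)).rz

/-- For `n ≥ 1` and `r ≥ 0`, the polynomial
`x^r (x · B_{n−1,r}(x) + r · B_{n−1,r−1}(x))` has only real zeros
(the second summand vanishes when `r = 0`). -/
theorem sigma_tree_union_complete_real_rooted (n r : ℕ) (hn : 1 ≤ n) :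
    RZ (Polynomial.X ^ r *
      (Polynomial.X * rBellPoly r (n - 1) +
        Polynomial.C (r : ℝ) * rBellPoly (r - 1) (n - 1))) :=
  sigma_tree_union_complete_real_rooted_general n r
end

section
/- Let h(t) = Σ_{j≥1} a_j t^j/j! be a real power series and define polynomials A_n(x) by 1 + Σ_{n≥1} A_n(x) t^n/n! = exp(x h(t)). Let A_n^{(1)}(x) := e^{-x} Σ_{j≥0} A_n(j) x^j/j! (the evaluation of A_n at the Bell umbra). Then 1 + Σ_{n≥1} A_n^{(1)}(x) t^n/n! = exp( x Σ_{j≥1} A_j(1) t^j/j! ). -/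
/-- The formal power series `h(t) = ∑_{j ≥ 1} a_j t^j / j!`. -/
noncomputable def hSeries (a : ℕ → ℝ) : PowerSeries ℝ :=
  PowerSeries.mk fun j => if j = 0 then 0 else a j / (j.factorial : ℝ)

/-- The polynomial family `A_n(x)` defined by `1 + ∑_{n ≥ 1} A_n(x) t^n/n! = exp(x h(t))`:
`A_n(x) = n! ∑_{k=0}^n (x^k/k!) · [t^n] h(t)^k`. -/
noncomputable def Apoly (a : ℕ → ℝ) (n : ℕ) (x : ℝ) : ℝ :=
  (n.factorial : ℝ) * ∑ k ∈ Finset.range (n + 1),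
    x ^ k / (k.factorial : ℝ) * PowerSeries.coeff n ((hSeries a) ^ k)

/-- The Bell-umbral evaluation `A_n^{(1)}(x) = e^{-x} ∑_{j ≥ 0} A_n(j) x^j / j!`. -/
noncomputable def AumbralEval (a : ℕ → ℝ) (n : ℕ) (x : ℝ) : ℝ :=
  Real.exp (-x) * ∑' j : ℕ, Apoly a n j * x ^ j / (j.factorial : ℝ)

/-!
Put `E = exp(h(t))`. Since `A_n(x)/n! = [tⁿ] exp(x h(t))` and `exp(j h) = Eʲ`, the umbral
evaluation is `e^{-x} ∑_j [tⁿ] Eʲ xʲ/j!`. Expanding `Eʲ = (1 + (E - 1))ʲ` binomially and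
using `∑_j C(j,m) xʲ/j! = eˣ xᵐ/m!` turns this into `[tⁿ] exp(x (E - 1))`, and the
coefficients of `E - 1` are exactly `A_j(1)/j!`. Throughout, `exp(c f)` is written
`(rescale c (exp K)).subst f`.
-/

open PowerSeries Finset

theorem Real.hasSum_choose_mul_pow_div_factorial (x : ℝ) (m : ℕ) :
    HasSum (fun j => (j.choose m : ℝ) * x ^ j / j.factorial) (x ^ m / m.factorial * exp x) := by
  rw [← hasSum_nat_add_iff' m, sum_eq_zero fun i hi => by
    rw [Nat.choose_eq_zero_of_lt (mem_range.1 hi), Nat.cast_zero, zero_mul, zero_div], sub_zero,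
    exp_eq_exp_ℝ]
  refine ((NormedSpace.expSeries_div_hasSum_exp x).mul_left _).congr_fun fun i => ?_
  have hchoose : ((i + m).choose m : ℝ) ≠ 0 :=
    Nat.cast_ne_zero.2 (Nat.choose_pos (Nat.le_add_left m i)).ne'
  rw [← Nat.add_choose_mul_factorial_mul_factorial i m]
  push_cast
  field_simp
  ring

namespace PowerSeries

variable {R : Type*} [CommSemiring R]

theorem coeff_pow_eq_zero_of_lt {f : R⟦X⟧} (hf : constantCoeff f = 0) {n k : ℕ}
    (h : n < k) : coeff n (f ^ k) = 0 :=
  X_pow_dvd_iff.mp (pow_dvd_pow_of_dvd (X_dvd_iff.mpr hf) k) n h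

theorem coeff_one_add_pow {g : R⟦X⟧} (hg : constantCoeff g = 0) (n j : ℕ) :
    coeff n ((1 + g) ^ j) = ∑ m ∈ range (n + 1), (j.choose m : R) * coeff n (g ^ m) := by
  have hterm : ∀ m, coeff n (g ^ m * 1 ^ (j - m) * (j.choose m : R⟦X⟧)) =
      (j.choose m : R) * coeff n (g ^ m) := fun m => by
    rw [one_pow, mul_one, ← map_natCast (C (R := R)), coeff_mul_C, mul_comm]
  rw [add_comm, add_pow, map_sum]
  simp only [hterm]
  calc ∑ m ∈ range (j + 1), (j.choose m : R) * coeff n (g ^ m)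
      = ∑ m ∈ range (j + n + 1), (j.choose m : R) * coeff n (g ^ m) :=
        sum_subset (range_subset_range.2 (by omega)) fun m _ hm => by
          rw [Nat.choose_eq_zero_of_lt (by simpa using hm), Nat.cast_zero, zero_mul]
    _ = _ :=
        (sum_subset (range_subset_range.2 (by omega)) fun m _ hm => by
          rw [coeff_pow_eq_zero_of_lt hg (by simpa using hm), mul_zero]).symm

variable {K : Type*} [Field K] [CharZero K]

theorem coeff_subst_rescale_exp {f : K⟦X⟧} (hf : constantCoeff f = 0) (c : K) (n : ℕ) :
    coeff n ((rescale c (exp K)).subst f) =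
      ∑ k ∈ range (n + 1), c ^ k / k.factorial * coeff n (f ^ k) := by
  rw [coeff_subst' (HasSubst.of_constantCoeff_zero' hf),
    finsum_eq_sum_of_support_subset _ (s := range (n + 1))]
  · refine sum_congr rfl fun k _ => ?_
    simp [coeff_rescale, coeff_exp, div_eq_mul_inv]
  · intro k hk
    simp only [Function.mem_support, coe_range, Set.mem_Iio] at hk ⊢
    by_contra! h
    exact hk (by rw [coeff_pow_eq_zero_of_lt hf (by omega), smul_zero])

theorem constantCoeff_subst_exp {f : K⟦X⟧} (hf : constantCoeff f = 0) :
    constantCoeff ((exp K).subst f) = 1 := by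
  simpa using coeff_subst_rescale_exp hf 1 0

theorem subst_exp_pow {f : K⟦X⟧} (hf : constantCoeff f = 0) (j : ℕ) :
    ((exp K).subst f) ^ j = (rescale (j : K) (exp K)).subst f := by
  rw [← subst_pow (HasSubst.of_constantCoeff_zero' hf), exp_pow_eq_rescale_exp]

theorem constantCoeff_subst_exp_sub_one {f : K⟦X⟧} (hf : constantCoeff f = 0) :
    constantCoeff ((exp K).subst f - 1) = 0 := by
  rw [map_sub, constantCoeff_subst_exp hf, map_one, sub_self]

theorem hasSum_coeff_one_add_pow_mul_pow_div_factorial {g : ℝ⟦X⟧} (hg : constantCoeff g = 0)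
    (x : ℝ) (n : ℕ) :
    HasSum (fun j => coeff n ((1 + g) ^ j) * x ^ j / j.factorial)
      (Real.exp x * coeff n ((rescale x (exp ℝ)).subst g)) := by
  have hterms := hasSum_sum fun m (_ : m ∈ range (n + 1)) =>
    (Real.hasSum_choose_mul_pow_div_factorial x m).mul_left (coeff n (g ^ m))
  have hlimit : Real.exp x * ∑ m ∈ range (n + 1), x ^ m / m.factorial * coeff n (g ^ m) =
      ∑ m ∈ range (n + 1), coeff n (g ^ m) * (x ^ m / m.factorial * Real.exp x) := by
    rw [mul_sum]
    exact sum_congr rfl fun m _ => by ring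
  rw [coeff_subst_rescale_exp hg, hlimit]
  refine hterms.congr_fun fun j => ?_
  rw [coeff_one_add_pow hg, sum_mul, sum_div]
  exact sum_congr rfl fun m _ => by ring

end PowerSeries

theorem constantCoeff_hSeries (a : ℕ → ℝ) : constantCoeff (hSeries a) = 0 := by
  rw [← coeff_zero_eq_constantCoeff_apply, hSeries, coeff_mk, if_pos rfl]

theorem Apoly_div_factorial (a : ℕ → ℝ) (n : ℕ) (x : ℝ) :
    Apoly a n x / n.factorial = coeff n ((rescale x (exp ℝ)).subst (hSeries a)) := by
  rw [Apoly, mul_div_cancel_left₀ _ (by positivity),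
    coeff_subst_rescale_exp (constantCoeff_hSeries a)]

theorem Apoly_natCast_div_factorial (a : ℕ → ℝ) (n j : ℕ) :
    Apoly a n j / n.factorial = coeff n (((exp ℝ).subst (hSeries a)) ^ j) := by
  rw [Apoly_div_factorial, subst_exp_pow (constantCoeff_hSeries a)]

theorem mk_Apoly_one_div_factorial (a : ℕ → ℝ) :
    (mk fun j => if j = 0 then (0 : ℝ) else Apoly a j 1 / j.factorial) =
      (exp ℝ).subst (hSeries a) - 1 := by
  ext j
  rcases eq_or_ne j 0 with rfl | hj
  · simp [constantCoeff_subst_exp (constantCoeff_hSeries a)]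
  · rw [coeff_mk, if_neg hj, Apoly_div_factorial, rescale_one, map_sub, coeff_one, if_neg hj,
      sub_zero, RingHom.id_apply]

theorem AumbralEval_div_factorial (a : ℕ → ℝ) (n : ℕ) (x : ℝ) :
    AumbralEval a n x / n.factorial =
      coeff n ((rescale x (exp ℝ)).subst ((exp ℝ).subst (hSeries a) - 1)) := by
  set E := (exp ℝ).subst (hSeries a)
  have hsum := hasSum_coeff_one_add_pow_mul_pow_div_factorial
    (constantCoeff_subst_exp_sub_one (constantCoeff_hSeries a)) x n
  rw [add_sub_cancel] at hsum
  calc AumbralEval a n x / n.factorial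
      = Real.exp (-x) * ∑' j : ℕ, coeff n (E ^ j) * x ^ j / j.factorial := by
        rw [AumbralEval, mul_div_assoc, ← tsum_div_const]
        congr 1
        exact tsum_congr fun j => by rw [← Apoly_natCast_div_factorial]; ring
    _ = _ := by
        rw [hsum.tsum_eq, ← mul_assoc, ← Real.exp_add, neg_add_cancel, Real.exp_zero, one_mul]

/-- `1 + ∑_{n ≥ 1} A_n^{(1)}(x) t^n/n! = exp(x ∑_{j ≥ 1} A_j(1) t^j/j!)`, as an identity
of formal power series in `t` (the right-hand exponential being expanded as
`∑_k x^k G(t)^k / k!` with `G(t) = ∑_{j ≥ 1} A_j(1) t^j/j!`). -/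
theorem umbral_egf_identity (a : ℕ → ℝ) (x : ℝ) :
    (PowerSeries.mk fun n =>
        if n = 0 then (1 : ℝ) else AumbralEval a n x / (n.factorial : ℝ))
      = PowerSeries.mk fun n =>
          ∑ k ∈ Finset.range (n + 1), x ^ k / (k.factorial : ℝ) *
            PowerSeries.coeff n
              ((PowerSeries.mk fun j =>
                if j = 0 then (0 : ℝ) else Apoly a j 1 / (j.factorial : ℝ)) ^ k) := by
  ext n
  rw [coeff_mk, coeff_mk]
  split_ifs with hn
  · subst hn
    simp
  · rw [AumbralEval_div_factorial, mk_Apoly_one_div_factorial,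
      coeff_subst_rescale_exp (constantCoeff_subst_exp_sub_one (constantCoeff_hSeries a))]
end
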